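/- Every proper subfunctor of a pointwise finite-dimensional, sequentially continuous functor F : M^op → vect_F is contained pointwise in a maximal (proper) subfunctor of F. -/

import Mathlib

open CategoryTheory CategoryTheory.Limits Opposite

noncomputable section

/-- The strip `M ⊂ ℝᵒᵖ × ℝ` between the two lines of slope `-1` given by
`x + y = a` and `x + y = b`. -/
def Strip (a b : ℝ) : Type := {p : ℝ × ℝ // a ≤ p.1 + p.2 ∧ p.1 + p.2 ≤ b}

namespace Strip

variable {a b : ℝ}

/-- The partial order inherited from `ℝᵒᵖ × ℝ`. -/
instance : PartialOrder (Strip a b) where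
  le p q := q.1.1 ≤ p.1.1 ∧ p.1.2 ≤ q.1.2
  le_refl p := ⟨le_rfl, le_rfl⟩
  le_trans p q r h h' := ⟨le_trans h'.1 h.1, le_trans h.2 h'.2⟩
  le_antisymm p q h h' :=
    Subtype.ext (Prod.ext (le_antisymm h'.1 h.1) (le_antisymm h.2 h'.2))

lemma le_def {p q : Strip a b} : p ≤ q ↔ q.1.1 ≤ p.1.1 ∧ p.1.2 ≤ q.1.2 := Iff.rfl

/-- The glide reflection `T`. -/
def glide (p : Strip a b) : Strip a b :=
  ⟨(a - p.1.2, b - p.1.1), by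
    obtain ⟨h1, h2⟩ := p.2; constructor <;> dsimp <;> linarith⟩

/-- The glide reflection `T` as an order isomorphism of `M`. -/
def glideEquiv : Strip a b ≃o Strip a b where
  toFun := glide
  invFun p := ⟨(b - p.1.2, a - p.1.1), by
    obtain ⟨h1, h2⟩ := p.2; constructor <;> dsimp <;> linarith⟩
  left_inv p := Subtype.ext (by simp [glide])
  right_inv p := Subtype.ext (by simp [glide])
  map_rel_iff' {p q} := by
    show (glide p ≤ glide q) ↔ _
    simp only [le_def, glide]
    constructor <;> rintro ⟨h1, h2⟩ <;> exact ⟨by linarith, by linarith⟩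

lemma glideEquiv_coords (p : Strip a b) :
    (glideEquiv p).1 = (a - p.1.2, b - p.1.1) := rfl

lemma glideEquiv_symm_coords (p : Strip a b) :
    (glideEquiv.symm p).1 = (b - p.1.2, a - p.1.1) := rfl

/-- The boundary `∂M = l₀ ∪ l₁`. -/
def OnBoundary (p : Strip a b) : Prop := p.1.1 + p.1.2 = a ∨ p.1.1 + p.1.2 = b

/-- The interior `int M`. -/
def InInterior (p : Strip a b) : Prop := a < p.1.1 + p.1.2 ∧ p.1.1 + p.1.2 < b

/-- `u` belongs to `(↓v) ∩ int(↑ T⁻¹ v)`, the support of the contravariant block `B_v`;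
equivalently, `v ∈ (↑u) ∩ int(↓ T u)`. -/
def BlockCond (v u : Strip a b) : Prop :=
  u ≤ v ∧ u.1.1 < b - v.1.2 ∧ a - v.1.1 < u.1.2

lemma blockCond_convex {v u u' u'' : Strip a b} (h1 : u ≤ u') (h2 : u' ≤ u'')
    (hu : BlockCond v u) (hu'' : BlockCond v u'') : BlockCond v u' :=
  ⟨le_trans h2 hu''.1, lt_of_le_of_lt h1.1 hu.2.1, lt_of_lt_of_le hu.2.2 h1.2⟩

lemma simpleCond_convex {w u u' u'' : Strip a b} (h1 : u ≤ u') (h2 : u' ≤ u'')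
    (hu : u = w) (hu'' : u'' = w) : u' = w :=
  le_antisymm (hu'' ▸ h2) (hu ▸ h1)

variable (a b) in
/-- An axis-aligned rectangle in `M` with corners `u ≤ v ≤ w` and remaining corner on `l₁`. -/
def IsCohomRect (u v w : Strip a b) : Prop :=
  u ≤ v ∧ v ≤ w ∧
    ((v.1.1 = u.1.1 ∧ v.1.2 = w.1.2 ∧ w.1.1 + u.1.2 = b) ∨
     (v.1.1 = w.1.1 ∧ v.1.2 = u.1.2 ∧ u.1.1 + w.1.2 = b))

lemma IsCohomRect.w_le_glide {u v w : Strip a b} (h : IsCohomRect a b u v w) :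
    w ≤ glideEquiv u := by
  obtain ⟨h1, h2, h3⟩ := h
  have hu := u.2; have hv := v.2; have hw := w.2
  obtain ⟨hle1, hle2⟩ := h1; obtain ⟨hle3, hle4⟩ := h2
  rw [le_def]
  rcases h3 with ⟨e1, e2, e3⟩ | ⟨e1, e2, e3⟩ <;>
    exact ⟨by rw [glideEquiv_coords]; dsimp; linarith,
           by rw [glideEquiv_coords]; dsimp; linarith⟩

lemma IsCohomRect.glideInv_le {u v w : Strip a b} (h : IsCohomRect a b u v w) :
    glideEquiv.symm w ≤ u := by
  have := h.w_le_glide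
  have h2 := glideEquiv.symm.monotone this
  simpa using h2

end Strip

section Functors

open Strip

variable (a b : ℝ) (K : Type) [Field K]

attribute [local instance] Classical.propDecidable

/-- auxiliary linear map used for the internal maps of `condFunctor`. -/
def condMap (P : Strip a b → Prop) (u u' : Strip a b) :
    ((PLift (P u') → K) →ₗ[K] (PLift (P u) → K)) where
  toFun f _ := if h' : P u' then f ⟨h'⟩ else 0
  map_add' f g := by funext h; by_cases h' : P u' <;> simp [h']
  map_smul' c f := by funext h; by_cases h' : P u' <;> simp [h']

@[simp] lemma condMap_apply (P : Strip a b → Prop) (u u' : Strip a b)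
    (f : PLift (P u') → K) (h : PLift (P u)) :
    condMap a b K P u u' f h = if h' : P u' then f ⟨h'⟩ else 0 := rfl

/-- A functor `Mᵒᵖ ⥤ Vect_K` supported on the set of points satisfying `P`,
with internal maps the identity wherever possible.  Both the contravariant blocks `B_v`
and the simple functors `S_w` arise this way. -/
def condFunctor (P : Strip a b → Prop)
    (hconv : ∀ ⦃u u' u'' : Strip a b⦄, u ≤ u' → u' ≤ u'' → P u → P u'' → P u') :
    (Strip a b)ᵒᵖ ⥤ ModuleCat K where
  obj u := ModuleCat.of K (PLift (P u.unop) → K)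
  map {x y} f := ModuleCat.ofHom (condMap a b K P y.unop x.unop)
  map_id x := by
    apply ModuleCat.hom_ext
    refine LinearMap.ext fun f => funext fun h => ?_
    show (if h' : P x.unop then f ⟨h'⟩ else 0) = f h
    rw [dif_pos h.down]
  map_comp {x y z} f g := by
    apply ModuleCat.hom_ext
    refine LinearMap.ext fun v => funext fun h => ?_
    show (if h' : P x.unop then v ⟨h'⟩ else 0)
        = condMap a b K P z.unop y.unop (condMap a b K P y.unop x.unop v) h
    by_cases hx : P x.unop
    · have hy : P y.unop := hconv (leOfHom g.unop) (leOfHom f.unop) h.down hx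
      simp [hx, hy]
    · by_cases hy : P y.unop <;> simp [hx, hy]

/-- The contravariant block `B_v`. -/
def Block (v : Strip a b) : (Strip a b)ᵒᵖ ⥤ ModuleCat K :=
  condFunctor a b K (BlockCond v) (fun _ _ _ h1 h2 hu hu'' => blockCond_convex h1 h2 hu hu'')

/-- The simple functor `S_w`. -/
def SimpleF (w : Strip a b) : (Strip a b)ᵒᵖ ⥤ ModuleCat K :=
  condFunctor a b K (fun u => u = w) (fun _ _ _ h1 h2 hu hu'' => simpleCond_convex h1 h2 hu hu'')

variable {a b K}

/-- The structure map `G(y) → G(x)` of a functor, for `x ≤ y` in `M`. -/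
def seqMap (G : (Strip a b)ᵒᵖ ⥤ ModuleCat K) {x y : Strip a b} (h : x ≤ y) :
    G.obj (op y) ⟶ G.obj (op x) :=
  G.map (homOfLE h).op

variable (a b K)

/-- Pointwise finite-dimensionality. -/
def Pfd (G : (Strip a b)ᵒᵖ ⥤ ModuleCat K) : Prop :=
  ∀ u : Strip a b, FiniteDimensional K (G.obj (op u))

/-- Vanishing on the boundary `∂M`. -/
def VanishesOnBoundary (G : (Strip a b)ᵒᵖ ⥤ ModuleCat K) : Prop :=
  ∀ u : Strip a b, OnBoundary u → ∀ x : G.obj (op u), x = 0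

/-- Sequential continuity: for every increasing sequence `u_k` converging to `L`, the
natural map `G L → lim_k G (u k)` is an isomorphism; elementarily, every compatible
family lifts uniquely. -/
def SeqContinuousF (G : (Strip a b)ᵒᵖ ⥤ ModuleCat K) : Prop :=
  ∀ (u : ℕ → Strip a b) (hu : Monotone u) (L : Strip a b) (hle : ∀ k, u k ≤ L),
    Filter.Tendsto (fun k => (u k).1) Filter.atTop (nhds L.1) →
    ∀ x : ∀ k, G.obj (op (u k)),
      (∀ k, seqMap G (hu (Nat.le_succ k)) (x (k + 1)) = x k) →
      ∃! y : G.obj (op L), ∀ k, seqMap G (hle k) y = x k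

/-- Cohomologicality: the long sequences associated to axis-aligned rectangles with one
corner on `l₁` are exact. -/
def Cohomological (G : (Strip a b)ᵒᵖ ⥤ ModuleCat K) : Prop :=
  VanishesOnBoundary a b K G ∧
  ∀ (u v w : Strip a b) (h : IsCohomRect a b u v w) (n : ℤ),
    (Function.Exact
        (seqMap G (((glideEquiv ^ n : Strip a b ≃o Strip a b)).monotone h.w_le_glide))
        (seqMap G (((glideEquiv ^ n : Strip a b ≃o Strip a b)).monotone h.2.1))) ∧
    (Function.Exact
        (seqMap G (((glideEquiv ^ n : Strip a b ≃o Strip a b)).monotone h.2.1))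
        (seqMap G (((glideEquiv ^ n : Strip a b ≃o Strip a b)).monotone h.1))) ∧
    (Function.Exact
        (seqMap G (((glideEquiv ^ n : Strip a b ≃o Strip a b)).monotone h.1))
        (seqMap G (((glideEquiv ^ n : Strip a b ≃o Strip a b)).monotone h.glideInv_le)))

/-- Bounded above support: the support is contained in the downset `{y - x ≤ c}`. -/
def BddAboveSupport (G : (Strip a b)ᵒᵖ ⥤ ModuleCat K) : Prop :=
  ∃ c : ℝ, ∀ u : Strip a b, c < u.1.2 - u.1.1 → ∀ x : G.obj (op u), x = 0

/-- Membership in the category `𝒥` of pfd, cohomological, sequentially continuous functors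
with bounded above support. -/
def MemJ (G : (Strip a b)ᵒᵖ ⥤ ModuleCat K) : Prop :=
  Pfd a b K G ∧ Cohomological a b K G ∧ SeqContinuousF a b K G ∧ BddAboveSupport a b K G

/-- `𝒥`-presentability. -/
def JPresentable (G : (Strip a b)ᵒᵖ ⥤ ModuleCat K) : Prop :=
  ∃ (H P : (Strip a b)ᵒᵖ ⥤ ModuleCat K) (_ : MemJ a b K H) (_ : MemJ a b K P)
    (f : H ⟶ P) (g : P ⟶ G),
      (∀ u : (Strip a b)ᵒᵖ, Function.Exact (f.app u) (g.app u)) ∧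
      (∀ u : (Strip a b)ᵒᵖ, Function.Surjective (g.app u))

/-- The 0-th Betti function `β⁰(G) : int M → ℕ`, `u ↦ dim Nat(G, S_u)`. -/
def beta0 (G : (Strip a b)ᵒᵖ ⥤ ModuleCat K) (v : Strip a b) : ℕ :=
  if InInterior v then Module.finrank K (G ⟶ SimpleF a b K v) else 0

/-- Admissible Betti functions. -/
def AdmissibleBetti (β : Strip a b → ℕ) : Prop :=
  (∀ v, ¬ InInterior v → β v = 0) ∧
  (∃ c : ℝ, ∀ v : Strip a b, c < v.1.2 - v.1.1 → β v = 0) ∧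
  (∀ u : Strip a b, {v : Strip a b | BlockCond v u ∧ β v ≠ 0}.Finite)

/-- Admissible Euler functions. -/
def AdmissibleEuler (μ : Strip a b → ℤ) : Prop :=
  AdmissibleBetti a b (fun v => (μ v).natAbs)

end Functors

section More

open Strip DirectSum

variable (a b : ℝ) (K : Type) [Field K]

attribute [local instance] Classical.propDecidable

lemma condMap_comp (P : Strip a b → Prop)
    (hconv : ∀ ⦃u u' u'' : Strip a b⦄, u ≤ u' → u' ≤ u'' → P u → P u'' → P u')
    {u u' u'' : Strip a b} (h1 : u ≤ u') (h2 : u' ≤ u'') :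
    condMap a b K P u u'' =
      (condMap a b K P u u').comp (condMap a b K P u' u'') := by
  refine LinearMap.ext fun f => funext fun h => ?_
  by_cases hx : P u''
  · have hy : P u' := hconv h1 h2 h.down hx
    simp [hx, hy]
  · by_cases hy : P u' <;> simp [hx, hy]

/-- A direct sum of `condFunctor`s for an indexed family of supports. -/
def condSumFunctor (ι : Type) (P : ι → Strip a b → Prop)
    (hconv : ∀ i, ∀ ⦃u u' u'' : Strip a b⦄, u ≤ u' → u' ≤ u'' → P i u → P i u'' → P i u') :
    (Strip a b)ᵒᵖ ⥤ ModuleCat K where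
  obj u := ModuleCat.of K (⨁ i : ι, (PLift (P i u.unop) → K))
  map {x y} f := ModuleCat.ofHom
    (DFinsupp.mapRange.linearMap (fun i => condMap a b K (P i) y.unop x.unop))
  map_id x := by
    have e : (fun i => condMap a b K (P i) x.unop x.unop)
        = fun i : ι => (LinearMap.id : (PLift (P i x.unop) → K) →ₗ[K] _) := by
      funext i
      refine LinearMap.ext fun f => funext fun h => ?_
      show (if h' : P i x.unop then f ⟨h'⟩ else 0) = f h
      rw [dif_pos h.down]
    change ModuleCat.ofHom
      (DFinsupp.mapRange.linearMap fun i => condMap a b K (P i) x.unop x.unop) = _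
    rw [e, DFinsupp.mapRange.linearMap_id]
    rfl
  map_comp {x y z} f g := by
    have e : (fun i => condMap a b K (P i) z.unop x.unop)
        = fun i => (condMap a b K (P i) z.unop y.unop).comp
            (condMap a b K (P i) y.unop x.unop) := by
      funext i
      exact condMap_comp a b K (P i) (hconv i) (leOfHom g.unop) (leOfHom f.unop)
    change ModuleCat.ofHom
      (DFinsupp.mapRange.linearMap fun i => condMap a b K (P i) z.unop x.unop) = _
    rw [e, DFinsupp.mapRange.linearMap_comp]
    rfl

/-- The direct sum `⊕_{v} B_v^{m v}` of contravariant blocks with multiplicities `m`. -/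
def blockSum (m : Strip a b → ℕ) : (Strip a b)ᵒᵖ ⥤ ModuleCat K :=
  condSumFunctor a b K (Σ v : Strip a b, Fin (m v)) (fun s u => BlockCond s.1 u)
    (fun _ _ _ _ h1 h2 hu hu'' => blockCond_convex h1 h2 hu hu'')

/-- The pointwise direct sum of a sequence of functors. -/
def sumFunctor (Q : ℕ → (Strip a b)ᵒᵖ ⥤ ModuleCat K) :
    (Strip a b)ᵒᵖ ⥤ ModuleCat K where
  obj u := ModuleCat.of K (⨁ n : ℕ, (Q n).obj u)
  map {x y} f := ModuleCat.ofHom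
    (DFinsupp.mapRange.linearMap (fun n => (((Q n).map f).hom : (Q n).obj x →ₗ[K] (Q n).obj y)))
  map_id x := by
    have e : (fun n => (((Q n).map (𝟙 x)).hom : (Q n).obj x →ₗ[K] (Q n).obj x))
        = fun n : ℕ => LinearMap.id := by
      funext n; rw [CategoryTheory.Functor.map_id]; rfl
    change ModuleCat.ofHom (DFinsupp.mapRange.linearMap
      fun n => (((Q n).map (𝟙 x)).hom : (Q n).obj x →ₗ[K] (Q n).obj x)) = _
    rw [e, DFinsupp.mapRange.linearMap_id]
    rfl
  map_comp {x y z} f g := by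
    have e : (fun n => (((Q n).map (f ≫ g)).hom : (Q n).obj x →ₗ[K] (Q n).obj z))
        = fun n => ((((Q n).map g).hom : (Q n).obj y →ₗ[K] (Q n).obj z).comp
            (((Q n).map f).hom : (Q n).obj x →ₗ[K] (Q n).obj y)) := by
      funext n; rw [CategoryTheory.Functor.map_comp]; rfl
    change ModuleCat.ofHom (DFinsupp.mapRange.linearMap
      fun n => (((Q n).map (f ≫ g)).hom : (Q n).obj x →ₗ[K] (Q n).obj z)) = _
    rw [e, DFinsupp.mapRange.linearMap_comp]
    rfl

/-- Precomposition with the glide reflection `T`, as an endofunctor of `Mᵒᵖ`. -/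
def Tfun : (Strip a b)ᵒᵖ ⥤ (Strip a b)ᵒᵖ :=
  ((glideEquiv (a := a) (b := b)).monotone.functor).op

/-- A resolution of `G` by functors in `𝒥` (hence a projective resolution in `𝒞`). -/
def IsJResolution (G : (Strip a b)ᵒᵖ ⥤ ModuleCat K)
    (P : ℕ → (Strip a b)ᵒᵖ ⥤ ModuleCat K)
    (d : ∀ n, P (n + 1) ⟶ P n) (ε : P 0 ⟶ G) : Prop :=
  (∀ n, MemJ a b K (P n)) ∧
  (∀ u, Function.Surjective ((ε.app u))) ∧
  (∀ u, Function.Exact ((d 0).app u) (ε.app u)) ∧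
  (∀ n u, Function.Exact ((d (n + 1)).app u) ((d n).app u))

/-- Equivariance of a resolution: `P (n+3) = P n ∘ T` and `d (n+3) = - d n ∘ T`. -/
def IsEquivariantRes (P : ℕ → (Strip a b)ᵒᵖ ⥤ ModuleCat K)
    (d : ∀ n, P (n + 1) ⟶ P n) : Prop :=
  ∃ hEq : ∀ n, P (n + 3) = Tfun a b ⋙ P n,
    ∀ n, d (n + 3) =
      eqToHom (hEq (n + 1)) ≫ (-(Functor.whiskerLeft (Tfun a b) (d n))) ≫ eqToHom (hEq n).symm

/-- The cochain complex `Nat(P_•, S_v)` obtained by applying `Nat(-, S_v)` to a resolution. -/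
def dStar (P : ℕ → (Strip a b)ᵒᵖ ⥤ ModuleCat K) (d : ∀ n, P (n + 1) ⟶ P n)
    (v : Strip a b) (n : ℕ) :
    (P n ⟶ SimpleF a b K v) →ₗ[K] (P (n + 1) ⟶ SimpleF a b K v) :=
  Linear.leftComp K (SimpleF a b K v) (d n)

/-- `dim_K Extⁿ_𝒞(G, S_v)`, computed as the `n`-th cohomology of `Nat(P_•, S_v)` for a
projective resolution `P_•` of `G` in `𝒞`. -/
def extDim (P : ℕ → (Strip a b)ᵒᵖ ⥤ ModuleCat K) (d : ∀ n, P (n + 1) ⟶ P n)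
    (v : Strip a b) : ℕ → ℕ
  | 0 => Module.finrank K (LinearMap.ker (dStar a b K P d v 0))
  | (n + 1) =>
      Module.finrank K
        (↥(LinearMap.ker (dStar a b K P d v (n + 1))) ⧸
          Submodule.comap (LinearMap.ker (dStar a b K P d v (n + 1))).subtype
            (LinearMap.range (dStar a b K P d v n)))

/-- The partial alternating sum `Σ_{n < N} (-1)ⁿ dim Extⁿ(F, S_v)`. -/
def eulerAt (P : ℕ → (Strip a b)ᵒᵖ ⥤ ModuleCat K) (d : ∀ n, P (n + 1) ⟶ P n)
    (v : Strip a b) (N : ℕ) : ℤ :=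
  ∑ n ∈ Finset.range N, (-1 : ℤ) ^ n * (extDim a b K P d v n : ℤ)

/-- Objects of `𝒥`. -/
def JObj : Type 1 := {G : (Strip a b)ᵒᵖ ⥤ ModuleCat.{0} K // MemJ a b K G}

/-- Objects of `pres(𝒥)`. -/
def PresObj : Type 1 := {G : (Strip a b)ᵒᵖ ⥤ ModuleCat.{0} K // JPresentable a b K G}

/-- Relations defining `K₀` of `𝒥`: `[Q] = [P] + [R]` for every (automatically split)
short exact sequence `0 → P → Q → R → 0` in `𝒥`. -/
def K0JRelations : Set (FreeAbelianGroup (JObj a b K)) :=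
  {x | ∃ (P Q R : JObj a b K) (κ : P.1 ⟶ Q.1) (ρ : Q.1 ⟶ R.1),
    (∀ u, Function.Injective (κ.app u)) ∧ (∀ u, Function.Surjective (ρ.app u)) ∧
    (∀ u, Function.Exact (κ.app u) (ρ.app u)) ∧
    x = FreeAbelianGroup.of Q - FreeAbelianGroup.of P - FreeAbelianGroup.of R}

/-- The Grothendieck group `K₀(𝒥)`. -/
def K0J : Type 1 :=
  FreeAbelianGroup (JObj a b K) ⧸ AddSubgroup.closure (K0JRelations a b K)

instance : AddCommGroup (K0J a b K) := by unfold K0J; infer_instance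

/-- The class `[G] ∈ K₀(𝒥)`. -/
def K0Jmk (G : JObj a b K) : K0J a b K :=
  QuotientAddGroup.mk (FreeAbelianGroup.of G)

/-- Relations defining `K₀` of `pres(𝒥)`: `[Q] = [P] + [R]` for every short exact
sequence `0 → P → Q → R → 0` of `𝒥`-presentable functors. -/
def K0PresRelations : Set (FreeAbelianGroup (PresObj a b K)) :=
  {x | ∃ (P Q R : PresObj a b K) (κ : P.1 ⟶ Q.1) (ρ : Q.1 ⟶ R.1),
    (∀ u, Function.Injective (κ.app u)) ∧ (∀ u, Function.Surjective (ρ.app u)) ∧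
    (∀ u, Function.Exact (κ.app u) (ρ.app u)) ∧
    x = FreeAbelianGroup.of Q - FreeAbelianGroup.of P - FreeAbelianGroup.of R}

/-- The Grothendieck group `K₀(pres 𝒥)`. -/
def K0Pres : Type 1 :=
  FreeAbelianGroup (PresObj a b K) ⧸ AddSubgroup.closure (K0PresRelations a b K)

instance : AddCommGroup (K0Pres a b K) := by unfold K0Pres; infer_instance

/-- The class `[G] ∈ K₀(pres 𝒥)`. -/
def K0PresMk (G : PresObj a b K) : K0Pres a b K :=
  QuotientAddGroup.mk (FreeAbelianGroup.of G)

/-- The abelian group `G(𝔹)` of admissible Euler functions. -/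
def eulerGroup : AddSubgroup (Strip a b → ℤ) where
  carrier := {μ | AdmissibleEuler a b μ}
  zero_mem' := by
    refine ⟨fun v _ => rfl, ⟨0, fun v _ => rfl⟩, fun u => ?_⟩
    convert Set.finite_empty
    ext v; simp
  add_mem' := by
    rintro μ ν ⟨h1, ⟨c1, h2⟩, h3⟩ ⟨h1', ⟨c2, h2'⟩, h3'⟩
    refine ⟨fun v hv => ?_, ⟨max c1 c2, fun v hv => ?_⟩, fun u => ?_⟩
    · simp only [Pi.add_apply]
      rw [show μ v = 0 by simpa using h1 v hv, show ν v = 0 by simpa using h1' v hv]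
      rfl
    · simp only [Pi.add_apply]
      rw [show μ v = 0 by simpa using h2 v (lt_of_le_of_lt (le_max_left _ _) hv),
        show ν v = 0 by simpa using h2' v (lt_of_le_of_lt (le_max_right _ _) hv)]
      rfl
    · refine Set.Finite.subset ((h3 u).union (h3' u)) ?_
      rintro v ⟨hb, hne⟩
      by_cases hμ : μ v = 0
      · exact Or.inr ⟨hb, by simp only [Pi.add_apply, hμ, zero_add] at hne; simpa using hne⟩
      · exact Or.inl ⟨hb, by simpa using hμ⟩
  neg_mem' := by
    rintro μ ⟨h1, h2, h3⟩
    refine ⟨fun v hv => ?_, ?_, fun u => ?_⟩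
    · simp only [Pi.neg_apply, Int.natAbs_neg]; exact h1 v hv
    · obtain ⟨c, hc⟩ := h2
      exact ⟨c, fun v hv => by simp only [Pi.neg_apply, Int.natAbs_neg]; exact hc v hv⟩
    · refine Set.Finite.subset (h3 u) ?_
      rintro v ⟨hb, hne⟩
      exact ⟨hb, by simpa [Int.natAbs_neg] using hne⟩

/-- Subfunctors of a functor `G : Mᵒᵖ ⥤ Vect_K`. -/
def Subfunctor (G : (Strip a b)ᵒᵖ ⥤ ModuleCat K) : Type :=
  {S : ∀ u : Strip a b, Submodule K (G.obj (op u)) //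
    ∀ (u u' : Strip a b) (h : u' ≤ u), Submodule.map (seqMap G h).hom (S u) ≤ S u'}

end More

end


/-!
A maximal subfunctor containing `G` is `comapAt w (ker φ)`, the largest subfunctor whose value at
a single point `w` lies in a hyperplane `ker φ ⊇ G(w)`: it is `F` away from `w`, hence maximal,
as soon as every structure map into `F(w)` from a point strictly above `w` lands in `ker φ`.

Such a pair `(w, φ)` is a maximal element, by Zorn's lemma, of the nonzero functionals vanishing
on `G`, preordered by transport along the structure maps. Along a chain the heights `y - x` are
bounded, because the structure map `F(v) → F(p₀)` vanishes for some `v ≥ p₀` (approach the line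
`l₁`, where `F` is zero); so a chain without top has a cofinal increasing sequence converging to
a point `L`. The images of the structure maps into each `F(u k)` stabilise by finite
dimensionality and then map onto one another (Mittag-Leffler), so by sequential continuity the
image of `F(L)` in `F(u 0)` is the stable image, on which the functionals of the chain do not
vanish: transported to `L` they give an upper bound.
-/

open Filter Topology

section SeqMap

variable {a b : ℝ} {K : Type} [Field K] (F : (Strip a b)ᵒᵖ ⥤ ModuleCat K)

lemma seqMap_hom_self {u : Strip a b} (h : u ≤ u) : (seqMap F h).hom = LinearMap.id := by
  simp [seqMap]

lemma seqMap_hom_comp {x y z : Strip a b} (h₁ : x ≤ y) (h₂ : y ≤ z) :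
    (seqMap F h₁).hom ∘ₗ (seqMap F h₂).hom = (seqMap F (h₁.trans h₂)).hom := by
  rw [seqMap, seqMap, seqMap, ← ModuleCat.hom_comp, ← F.map_comp, ← op_comp, homOfLE_comp]

end SeqMap

namespace Strip

variable {a b : ℝ}

def height (p : Strip a b) : ℝ := p.1.2 - p.1.1

lemma height_mono : Monotone (height : Strip a b → ℝ) := fun p q h => by
  rw [le_def] at h
  unfold height
  linarith [h.1, h.2]

lemma eq_of_le_of_height_le {p q : Strip a b} (h : p ≤ q) (h' : q.height ≤ p.height) : p = q := by
  rw [le_def] at h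
  unfold height at h'
  exact Subtype.ext (Prod.ext (by linarith [h.1, h.2]) (by linarith [h.1, h.2]))

lemma height_le_of_not_le {v q : Strip a b} (h : ¬ v ≤ q) :
    q.height ≤ max (b - 2 * v.1.1) (2 * v.1.2 - a) := by
  rw [le_def, not_and_or, not_le, not_le] at h
  have := q.2
  unfold height
  rcases h with h | h
  · exact le_max_of_le_left (by linarith)
  · exact le_max_of_le_right (by linarith)

lemma exists_tendsto_of_monotone {u : ℕ → Strip a b} (hu : Monotone u)
    (hbdd : BddAbove (Set.range (height ∘ u))) :
    ∃ L : Strip a b, (∀ k, u k ≤ L) ∧ Tendsto (fun k => (u k).1) atTop (𝓝 L.1) := by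
  obtain ⟨C, hC⟩ := hbdd
  have hCk (k : ℕ) : (u k).1.2 - (u k).1.1 ≤ C := hC ⟨k, rfl⟩
  have hx : BddBelow (Set.range fun k => (u k).1.1) :=
    ⟨(a - C) / 2, by rintro _ ⟨k, rfl⟩; linarith [hCk k, (u k).2.1]⟩
  have hy : BddAbove (Set.range fun k => (u k).1.2) :=
    ⟨(b + C) / 2, by rintro _ ⟨k, rfl⟩; linarith [hCk k, (u k).2.2]⟩
  have htx := tendsto_atTop_ciInf (fun k m h => (hu h).1) hx
  have hty := tendsto_atTop_ciSup (fun k m h => (hu h).2) hy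
  let L : Strip a b := ⟨(⨅ k, (u k).1.1, ⨆ k, (u k).1.2),
    ge_of_tendsto' (htx.add hty) fun k => (u k).2.1,
    le_of_tendsto' (htx.add hty) fun k => (u k).2.2⟩
  exact ⟨L, fun k => ⟨ciInf_le hx k, le_ciSup hy k⟩, htx.prodMk_nhds hty⟩

lemma exists_monotone_tendsto_of_le {u L : Strip a b} (h : u ≤ L) :
    ∃ s : ℕ → Strip a b, Monotone s ∧ s 0 = u ∧ (∀ k, s k ≤ L) ∧
      Tendsto (fun k => (s k).1) atTop (𝓝 L.1) := by
  set t : ℕ → ℝ := fun k => k / (k + 1)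
  have ht0 (k : ℕ) : 0 ≤ t k := by positivity
  have ht1 (k : ℕ) : t k ≤ 1 := div_le_one_of_le₀ (by linarith) (by positivity)
  have htmono : Monotone t := fun k m hkm => by
    simp only [t]
    rw [div_le_div_iff₀ (by positivity) (by positivity)]
    have : (k : ℝ) ≤ m := by exact_mod_cast hkm
    linarith
  rw [le_def] at h
  have hu := u.2
  have hL := L.2
  let s : ℕ → Strip a b := fun k => ⟨u.1 + t k • (L.1 - u.1), by
    constructor <;> dsimp <;> nlinarith [ht0 k, ht1 k]⟩
  refine ⟨s, fun k m hkm => ?_, Subtype.ext (by simp [s, t]), fun k => ?_, ?_⟩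
  · have := htmono hkm
    constructor <;> dsimp [s] <;> nlinarith
  · constructor <;> dsimp [s] <;> nlinarith [ht0 k, ht1 k]
  · have := (tendsto_natCast_div_add_atTop (1 : ℝ)).smul_const (L.1 - u.1) |>.const_add u.1
    simpa [s, t] using this

end Strip

lemma exists_seq_map_eq_of_subset_image {X : ℕ → Type*} (f : ∀ k, X (k + 1) → X k)
    (S : ∀ k, Set (X k)) (hS : ∀ k, S k ⊆ f k '' S (k + 1)) {x₀ : X 0} (hx₀ : x₀ ∈ S 0) :
    ∃ x : ∀ k, X k, x 0 = x₀ ∧ ∀ k, f k (x (k + 1)) = x k := by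
  choose g hgS hfg using fun k (y : S k) => hS k y.2
  let y : ∀ k, S k := fun k => Nat.rec ⟨x₀, hx₀⟩ (fun k y => ⟨g k y, hgS k y⟩) k
  exact ⟨fun k => (y k).1, rfl, fun k => hfg k (y k)⟩

section MittagLeffler

variable {a b : ℝ} {K : Type} [Field K] {F : (Strip a b)ᵒᵖ ⥤ ModuleCat K}

lemma exists_range_seqMap_stable (hpfd : Pfd a b K F) {u : ℕ → Strip a b} (hu : Monotone u)
    (k : ℕ) : ∃ M, ∃ hkM : k ≤ M, ∀ m (hMm : M ≤ m),
      LinearMap.range (seqMap F (hu (hkM.trans hMm))).hom =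
        LinearMap.range (seqMap F (hu hkM)).hom := by
  have := hpfd (u k)
  obtain ⟨_, ⟨M, hkM, rfl⟩, hmin⟩ :=
    (wellFounded_lt (α := Submodule K (F.obj (op (u k))))).has_min
      {R | ∃ M, ∃ hkM : k ≤ M, R = LinearMap.range (seqMap F (hu hkM)).hom} ⟨_, k, le_rfl, rfl⟩
  refine ⟨M, hkM, fun m hMm => eq_of_le_of_not_lt ?_ (hmin _ ⟨m, hkM.trans hMm, rfl⟩)⟩
  rw [← seqMap_hom_comp F (hu hkM) (hu hMm)]
  exact LinearMap.range_comp_le_range _ _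

theorem exists_range_seqMap_eq_of_tendsto (hpfd : Pfd a b K F) (hseq : SeqContinuousF a b K F)
    {u : ℕ → Strip a b} (hu : Monotone u) {L : Strip a b} (hle : ∀ k, u k ≤ L)
    (htend : Tendsto (fun k => (u k).1) atTop (𝓝 L.1)) :
    ∃ m, LinearMap.range (seqMap F (hle 0)).hom =
      LinearMap.range (seqMap F (hu (Nat.zero_le m))).hom := by
  choose M hkM hM using exists_range_seqMap_stable hpfd hu
  let E k : Submodule K (F.obj (op (u k))) := LinearMap.range (seqMap F (hu (hkM k))).hom
  have hE (k : ℕ) : (E k : Set _) ⊆ seqMap F (hu k.le_succ) '' E (k + 1) := by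
    have hm := le_max_left (M k) (M (k + 1))
    have hm' := le_max_right (M k) (M (k + 1))
    have : E k = (E (k + 1)).map (seqMap F (hu k.le_succ)).hom := by
      -- both are the image from the common stable index `max (M k) (M (k + 1))`
      simp only [E]
      rw [← hM k _ hm, ← hM (k + 1) _ hm', ← LinearMap.range_comp, seqMap_hom_comp]
    rw [this, Submodule.map_coe]
  refine ⟨M 0, le_antisymm ?_ fun x₀ hx₀ => ?_⟩
  · rw [← seqMap_hom_comp F (hu (Nat.zero_le (M 0))) (hle (M 0))]
    exact LinearMap.range_comp_le_range _ _
  · obtain ⟨x, rfl, hx⟩ := exists_seq_map_eq_of_subset_image _ _ hE hx₀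
    obtain ⟨y, hy, -⟩ := hseq u hu L hle htend x hx
    exact ⟨y, hy 0⟩

theorem exists_seqMap_eq_zero (hpfd : Pfd a b K F) (hseq : SeqContinuousF a b K F)
    (hvan : VanishesOnBoundary a b K F) (u : Strip a b) :
    ∃ v, ∃ h : u ≤ v, (seqMap F h).hom = 0 := by
  obtain ⟨L, huL, hL⟩ : ∃ L : Strip a b, u ≤ L ∧ L.OnBoundary :=
    ⟨⟨(u.1.1, b - u.1.1), by dsimp; linarith [u.2.1, u.2.2], by dsimp; linarith⟩,
      ⟨le_rfl, by dsimp; linarith [u.2.2]⟩, Or.inr (by dsimp; ring)⟩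
  obtain ⟨s, hs, rfl, hsL, htend⟩ := Strip.exists_monotone_tendsto_of_le huL
  obtain ⟨m, hm⟩ := exists_range_seqMap_eq_of_tendsto hpfd hseq hs hsL htend
  refine ⟨s m, hs (Nat.zero_le m), LinearMap.range_eq_bot.1 ?_⟩
  rw [← hm, LinearMap.range_eq_bot]
  ext x
  rw [hvan L hL x, map_zero, LinearMap.zero_apply]

end MittagLeffler

section

variable {a b : ℝ} {K : Type} [Field K] {F : (Strip a b)ᵒᵖ ⥤ ModuleCat K}

structure DualPoint (G : Subfunctor a b K F) where
  pt : Strip a b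
  φ : Module.Dual K (F.obj (op pt))
  ne_zero : φ ≠ 0
  le_ker : G.1 pt ≤ LinearMap.ker φ

namespace DualPoint

variable {G : Subfunctor a b K F}

instance : Preorder (DualPoint G) where
  le p q := ∃ h : p.pt ≤ q.pt, q.φ = p.φ ∘ₗ (seqMap F h).hom
  le_refl p := ⟨le_rfl, by rw [seqMap_hom_self, LinearMap.comp_id]⟩
  le_trans p q r := fun ⟨h₁, e₁⟩ ⟨h₂, e₂⟩ =>
    ⟨h₁.trans h₂, by rw [e₂, e₁, LinearMap.comp_assoc, seqMap_hom_comp]⟩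

lemma pt_le_pt {p q : DualPoint G} (h : p ≤ q) : p.pt ≤ q.pt := h.1

lemma φ_eq_comp {p q : DualPoint G} (h : p ≤ q) : q.φ = p.φ ∘ₗ (seqMap F (pt_le_pt h)).hom := h.2

lemma nonempty_of_ne_top {u : Strip a b} (hu : G.1 u ≠ ⊤) : Nonempty (DualPoint G) := by
  obtain ⟨φ, hφ, hle⟩ := (G.1 u).exists_le_ker_of_lt_top hu.lt_top
  exact ⟨⟨u, φ, hφ, hle⟩⟩

def push (p : DualPoint G) {v : Strip a b} (h : p.pt ≤ v)
    (hne : p.φ ∘ₗ (seqMap F h).hom ≠ 0) : DualPoint G where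
  pt := v
  φ := p.φ ∘ₗ (seqMap F h).hom
  ne_zero := hne
  le_ker _ hx := p.le_ker (G.2 v p.pt h (Submodule.mem_map_of_mem hx))

lemma le_push (p : DualPoint G) {v : Strip a b} (h : p.pt ≤ v)
    (hne : p.φ ∘ₗ (seqMap F h).hom ≠ 0) : p ≤ p.push h hne :=
  ⟨h, rfl⟩

lemma le_of_ge_of_height_le {p q : DualPoint G} (hqp : q ≤ p)
    (hh : p.pt.height ≤ q.pt.height) : p ≤ q := by
  obtain ⟨h, e⟩ := hqp
  have hpt := Strip.eq_of_le_of_height_le h hh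
  exact ⟨hpt.ge, by rw [e, LinearMap.comp_assoc, seqMap_hom_comp, seqMap_hom_self,
    LinearMap.comp_id]⟩

lemma not_le_pt_of_seqMap_eq_zero {p q : DualPoint G} (hpq : p ≤ q) {v : Strip a b}
    (hv : p.pt ≤ v) (h₀ : (seqMap F hv).hom = 0) : ¬ v ≤ q.pt := by
  intro hvq
  obtain ⟨h, e⟩ := hpq
  apply q.ne_zero
  rw [e, ← seqMap_hom_comp F hv hvq, h₀, LinearMap.zero_comp, LinearMap.comp_zero]

lemma range_seqMap_le_ker_of_isMax {m : DualPoint G} (hm : IsMax m) {v : Strip a b}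
    (h : m.pt ≤ v) (hv : v ≠ m.pt) : LinearMap.range (seqMap F h).hom ≤ LinearMap.ker m.φ := by
  rw [LinearMap.range_le_ker_iff]
  by_contra hne
  exact hv ((pt_le_pt (hm (m.le_push h hne))).antisymm h)

lemma exists_ge_of_tendsto (hpfd : Pfd a b K F) (hseq : SeqContinuousF a b K F)
    {p : ℕ → DualPoint G} (hp : Monotone p) {L : Strip a b} (hle : ∀ k, (p k).pt ≤ L)
    (htend : Tendsto (fun k => (p k).pt.1) atTop (𝓝 L.1)) : ∃ q : DualPoint G, ∀ k, p k ≤ q := by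
  have hp₀ (k : ℕ) : p 0 ≤ p k := hp (Nat.zero_le k)
  have hφ (k : ℕ) := φ_eq_comp (hp₀ k)
  obtain ⟨m, hm⟩ := exists_range_seqMap_eq_of_tendsto hpfd hseq
    (fun _ _ h => pt_le_pt (hp h)) hle htend
  have hne : (p 0).φ ∘ₗ (seqMap F (hle 0)).hom ≠ 0 := by
    rw [ne_eq, ← LinearMap.range_le_ker_iff, hm, LinearMap.range_le_ker_iff, ← hφ]
    exact (p m).ne_zero
  refine ⟨(p 0).push (hle 0) hne, fun k => ⟨hle k, ?_⟩⟩
  change (p 0).φ ∘ₗ (seqMap F (hle 0)).hom = (p k).φ ∘ₗ (seqMap F (hle k)).hom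
  rw [hφ k, LinearMap.comp_assoc, seqMap_hom_comp]

variable {c : Set (DualPoint G)}

lemma le_of_height_le_of_isChain (hc : IsChain (· ≤ ·) c) {p q : DualPoint G} (hp : p ∈ c)
    (hq : q ∈ c) (h : p.pt.height ≤ q.pt.height) : p ≤ q :=
  (hc.total hp hq).elim id fun hqp => le_of_ge_of_height_le hqp h

lemma bddAbove_height_of_isChain (hpfd : Pfd a b K F) (hseq : SeqContinuousF a b K F)
    (hvan : VanishesOnBoundary a b K F) (hc : IsChain (· ≤ ·) c) {p₀ : DualPoint G}
    (hp₀ : p₀ ∈ c) : BddAbove ((fun p : DualPoint G => p.pt.height) '' c) := by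
  obtain ⟨v, hv, h₀⟩ := exists_seqMap_eq_zero hpfd hseq hvan p₀.pt
  refine ⟨max p₀.pt.height (max (b - 2 * v.1.1) (2 * v.1.2 - a)), ?_⟩
  rintro _ ⟨q, hq, rfl⟩
  rcases hc.total hp₀ hq with hpq | hqp
  · exact le_max_of_le_right
      (Strip.height_le_of_not_le (not_le_pt_of_seqMap_eq_zero hpq hv h₀))
  · exact le_max_of_le_left (Strip.height_mono (pt_le_pt hqp))

lemma bddAbove_of_isChain (hpfd : Pfd a b K F) (hseq : SeqContinuousF a b K F)
    (hvan : VanishesOnBoundary a b K F) (hc : IsChain (· ≤ ·) c) (hne : c.Nonempty) :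
    BddAbove c := by
  have hbdd := bddAbove_height_of_isChain hpfd hseq hvan hc hne.some_mem
  by_cases htop : ∃ q ∈ c, ∀ p ∈ c, p.pt.height ≤ q.pt.height
  · obtain ⟨q, hq, hmax⟩ := htop
    exact ⟨q, fun p hp => le_of_height_le_of_isChain hc hp hq (hmax p hp)⟩
  push Not at htop
  obtain ⟨s, hs, hs_tend, hs_mem⟩ := exists_seq_tendsto_sSup (hne.image _) hbdd
  choose p hpc hps using hs_mem
  replace hps (k : ℕ) : (p k).pt.height = s k := hps k
  have hp : Monotone p := fun k m hkm =>
    le_of_height_le_of_isChain hc (hpc k) (hpc m) (by rw [hps, hps]; exact hs hkm)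
  have hp_bdd : BddAbove (Set.range (Strip.height ∘ fun k => (p k).pt)) :=
    ⟨sSup _, by rintro _ ⟨k, rfl⟩; exact le_csSup hbdd ⟨p k, hpc k, rfl⟩⟩
  obtain ⟨L, hle, htend⟩ :=
    Strip.exists_tendsto_of_monotone (fun _ _ h => pt_le_pt (hp h)) hp_bdd
  obtain ⟨q, hq⟩ := exists_ge_of_tendsto hpfd hseq hp hle htend
  refine ⟨q, fun r hr => ?_⟩
  obtain ⟨r', hr', hrr'⟩ := htop r hr
  have hr_lt : r.pt.height < sSup _ := hrr'.trans_le (le_csSup hbdd ⟨r', hr', rfl⟩)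
  obtain ⟨k, hk⟩ := (hs_tend.eventually (lt_mem_nhds hr_lt)).exists
  exact (le_of_height_le_of_isChain hc hr (hpc k) (hps k ▸ hk.le)).trans (hq k)

end DualPoint

end

namespace Subfunctor

variable {a b : ℝ} {K : Type} [Field K] {F : (Strip a b)ᵒᵖ ⥤ ModuleCat K}
  {w : Strip a b} {W : Submodule K (F.obj (op w))}

def comapAt (w : Strip a b) (W : Submodule K (F.obj (op w))) : Subfunctor a b K F :=
  ⟨fun u => (⨅ h : w ≤ u, W.comap (seqMap F h).hom : Submodule K (F.obj (op u))),
    fun u u' h => le_iInf fun h' => by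
      rw [Submodule.map_le_iff_le_comap, ← Submodule.comap_comp, seqMap_hom_comp]
      exact iInf_le _ (h'.trans h)⟩

lemma comapAt_apply_self : (comapAt w W).1 w = W :=
  le_antisymm ((iInf_le _ le_rfl).trans_eq (by rw [seqMap_hom_self, Submodule.comap_id]))
    (le_iInf fun h => by rw [seqMap_hom_self, Submodule.comap_id])

lemma le_comapAt {G : Subfunctor a b K F} (hG : G.1 w ≤ W) (u : Strip a b) :
    G.1 u ≤ (comapAt w W).1 u :=
  le_iInf fun h => Submodule.map_le_iff_le_comap.1 ((G.2 u w h).trans hG)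

lemma comapAt_apply_of_ne
    (habove : ∀ v (h : w ≤ v), v ≠ w → LinearMap.range (seqMap F h).hom ≤ W)
    {u : Strip a b} (hu : u ≠ w) : (comapAt w W).1 u = ⊤ :=
  eq_top_iff.2 <| le_iInf fun h => by
    rw [← Submodule.map_le_iff_le_comap, Submodule.map_top]
    exact habove u h hu

theorem eq_comapAt_of_le (hW : IsCoatom W)
    (habove : ∀ v (h : w ≤ v), v ≠ w → LinearMap.range (seqMap F h).hom ≤ W)
    {G : Subfunctor a b K F} (hG : ∃ u, G.1 u ≠ ⊤) (hle : ∀ u, (comapAt w W).1 u ≤ G.1 u)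
    (u : Strip a b) : G.1 u = (comapAt w W).1 u := by
  have hoff (u : Strip a b) (hu : u ≠ w) : G.1 u = ⊤ :=
    top_unique ((comapAt_apply_of_ne habove hu).ge.trans (hle u))
  obtain ⟨u₀, hu₀⟩ := hG
  obtain rfl : u₀ = w := by_contra fun h => hu₀ (hoff u₀ h)
  by_cases hu : u = u₀
  · subst hu
    have hle₀ := hle u
    rw [comapAt_apply_self] at hle₀ ⊢
    exact (hW.le_iff.1 hle₀).resolve_left hu₀
  · rw [hoff u hu, comapAt_apply_of_ne habove hu]

end Subfunctor

/-- every proper subfunctor of a pfd sequentially continuous functor is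
contained pointwise in a maximal proper subfunctor. -/
theorem proper_subfunctor_le_maximal (a b : ℝ) (K : Type) [Field K]
    (F : (Strip a b)ᵒᵖ ⥤ ModuleCat K)
    (hpfd : Pfd a b K F) (hseq : SeqContinuousF a b K F)
    (hvan : VanishesOnBoundary a b K F)
    (G : Subfunctor a b K F) (hproper : ∃ u : Strip a b, G.1 u ≠ ⊤) :
    ∃ Gmax : Subfunctor a b K F,
      (∃ u : Strip a b, Gmax.1 u ≠ ⊤) ∧
      (∀ u : Strip a b, G.1 u ≤ Gmax.1 u) ∧
      (∀ G' : Subfunctor a b K F, (∃ u : Strip a b, G'.1 u ≠ ⊤) →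
        (∀ u : Strip a b, Gmax.1 u ≤ G'.1 u) → ∀ u : Strip a b, G'.1 u = Gmax.1 u) := by
  obtain ⟨u, hu⟩ := hproper
  have := DualPoint.nonempty_of_ne_top (G := G) hu
  obtain ⟨m, hm⟩ := zorn_le_nonempty (α := DualPoint G) fun c hc hne =>
    DualPoint.bddAbove_of_isChain hpfd hseq hvan hc hne
  have hker : IsCoatom (LinearMap.ker m.φ) :=
    LinearMap.isCoatom_ker_of_surjective (m.φ.surjective_or_eq_zero.resolve_right m.ne_zero)
  refine ⟨Subfunctor.comapAt m.pt (LinearMap.ker m.φ), ⟨m.pt, ?_⟩, Subfunctor.le_comapAt m.le_ker,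
    fun G' => Subfunctor.eq_comapAt_of_le hker fun _ => DualPoint.range_seqMap_le_ker_of_isMax hm⟩
  rw [Subfunctor.comapAt_apply_self]
  exact hker.1
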